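/- If the follower's best response to every leader action is unique (strict best response), then the Stackelberg equilibrium outcome payoff to the leader is at least the leader's payoff in any pure Nash equilibrium of the corresponding simultaneous-move game. -/
import Mathlib

/-- With a unique (strict) follower best response, the leader's Stackelberg
payoff is at least his payoff in any pure Nash equilibrium of the
simultaneous game. -/
theorem stackelberg_ge_nash
    {A B : Type*} [Fintype A] [Fintype B] [Nonempty A] [Nonempty B]
    (uL uF : A → B → ℝ) (b : A → B)
    (hstrict : ∀ (a : A) (b' : B), b' ≠ b a → uF a (b a) > uF a b')
    (astar : A) (hstar : ∀ a : A, uL astar (b astar) ≥ uL a (b a))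
    (a0 : A) (b0 : B)
    (hNashL : ∀ a : A, uL a0 b0 ≥ uL a b0)
    (hNashF : ∀ b' : B, uF a0 b0 ≥ uF a0 b') :
    uL astar (b astar) ≥ uL a0 b0 := by
  have hb0 : b0 = b a0 := by
    by_contra h
    exact absurd (hNashF (b a0)) (not_le.2 (hstrict a0 b0 h))
  rw [hb0]
  exact hstar a0
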